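/- arXiv:2009.02640 — 2 statements merged into one kernel-verified Lean document; each statement's English description precedes it below -/
import Mathlib

section
/- Let p_1 < p_2 < ... be the primes. For every n ≥ 0, the limit as real s → ∞ of (ζ(s) - Q_n(s))^{-1/s} equals p_{n+1}, where Q_n(s) = ∏_{k=1}^{n}(1 - p_k^{-s})^{-1} and Q_0 = 1. -/
open Filter Topology

noncomputable def realZeta (s : ℝ) : ℝ := ∑' n : ℕ, ((n : ℝ) + 1) ^ (-s)

noncomputable def nthPrime (k : ℕ) : ℕ := Nat.nth Nat.Prime k

noncomputable def Qpartial (n : ℕ) (s : ℝ) : ℝ :=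
  ∏ k ∈ Finset.range n, (1 - ((nthPrime k : ℝ)) ^ (-s))⁻¹

/-!
For `s > 1` the Euler product `Qpartial n s` is the sum of `m ^ (-s)` over the `N`-smooth `m`,
where `N = nthPrime n` is `p_{n+1}`; hence `realZeta s - Qpartial n s` is the sum over the
complementary set `S`, whose least nonzero element is `N`. For any such `S` and `s ≥ 2`,
`N ^ (-s) ≤ ∑_{m ∈ S} m ^ (-s) ≤ (N ^ 2 ∑_{m ∈ S} m ^ (-2)) N ^ (-s)`,
and taking `(-1/s)`-th powers squeezes the limit to `N`, since `c ^ (-1/s) → 1` for every constant `c > 0`.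
-/

namespace Nat

lemma primesBelow_nth_prime (n : ℕ) :
    (nth Prime n).primesBelow = (Finset.range n).image (nth Prime) := by
  ext p
  simp only [mem_primesBelow, Finset.mem_image, Finset.mem_range]
  constructor
  · rintro ⟨hlt, hp⟩
    refine ⟨count Prime p, (nth_lt_nth infinite_setOfPred_prime).mp ?_, nth_count hp⟩
    rwa [nth_count hp]
  · rintro ⟨k, hk, rfl⟩
    exact ⟨(nth_lt_nth infinite_setOfPred_prime).mpr hk, prime_nth_prime k⟩

lemma Prime.notMem_smoothNumbers {p : ℕ} (hp : p.Prime) : p ∉ p.smoothNumbers :=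
  fun h => (mem_smoothNumbers'.mp h p hp dvd_rfl).false

end Nat

-- `m ↦ m ^ (-s)` bundled as a monoid homomorphism, as the Euler product lemmas require.
noncomputable def natRpowNegHom (s : ℝ) : ℕ →* ℝ where
  toFun m := (m : ℝ) ^ (-s)
  map_one' := by simp
  map_mul' m n := by
    push_cast
    exact Real.mul_rpow m.cast_nonneg n.cast_nonneg

@[simp]
lemma natRpowNegHom_apply (s : ℝ) (m : ℕ) : natRpowNegHom s m = (m : ℝ) ^ (-s) := rfl

lemma summable_nat_rpow_neg {s : ℝ} (hs : 1 < s) : Summable fun m : ℕ => (m : ℝ) ^ (-s) :=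
  Real.summable_nat_rpow.mpr (neg_lt_neg hs)

lemma realZeta_eq_tsum {s : ℝ} (hs : 1 < s) : realZeta s = ∑' m : ℕ, (m : ℝ) ^ (-s) := by
  rw [(summable_nat_rpow_neg hs).tsum_eq_zero_add, Nat.cast_zero,
    Real.zero_rpow (by linarith), zero_add, realZeta]
  push_cast
  rfl

lemma Qpartial_eq_tsum_smoothNumbers {s : ℝ} (hs : 1 < s) (n : ℕ) :
    Qpartial n s = ∑' m : (nthPrime n).smoothNumbers, ((m : ℕ) : ℝ) ^ (-s) := by
  have euler := EulerProduct.prod_primesBelow_geometric_eq_tsum_smoothNumbers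
    (f := natRpowNegHom s) (summable_nat_rpow_neg hs) (nthPrime n)
  simp only [natRpowNegHom_apply] at euler
  rw [← euler, Qpartial, nthPrime, Nat.primesBelow_nth_prime,
    Finset.prod_image fun a _ b _ hab => Nat.nth_injective Nat.infinite_setOfPred_prime hab]
  rfl

lemma realZeta_sub_Qpartial {s : ℝ} (hs : 1 < s) (n : ℕ) :
    realZeta s - Qpartial n s
      = ∑' m : ((nthPrime n).smoothNumbers ᶜ : Set ℕ), ((m : ℕ) : ℝ) ^ (-s) := by
  rw [realZeta_eq_tsum hs, Qpartial_eq_tsum_smoothNumbers hs,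
    ← ((summable_nat_rpow_neg hs).subtype _).tsum_add_tsum_compl
      ((summable_nat_rpow_neg hs).subtype _), add_sub_cancel_left]

section LeastElement

variable {S : Set ℕ} {N : ℕ}

lemma rpow_neg_le_tsum_rpow_neg (hN : N ∈ S) {s : ℝ} (hs : 1 < s) :
    (N : ℝ) ^ (-s) ≤ ∑' m : S, ((m : ℕ) : ℝ) ^ (-s) :=
  ((summable_nat_rpow_neg hs).subtype S).le_tsum ⟨N, hN⟩
    fun m _ => Real.rpow_nonneg m.1.cast_nonneg _

lemma tsum_rpow_neg_le_rpow_mul_tsum (hN : 0 < N) (hmin : ∀ m ∈ S, m ≠ 0 → N ≤ m)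
    {s t : ℝ} (ht : 1 < t) (hts : t ≤ s) :
    ∑' m : S, ((m : ℕ) : ℝ) ^ (-s) ≤ (N : ℝ) ^ (t - s) * ∑' m : S, ((m : ℕ) : ℝ) ^ (-t) := by
  rw [← tsum_mul_left]
  refine ((summable_nat_rpow_neg (ht.trans_le hts)).subtype S).tsum_le_tsum (fun ⟨m, hm⟩ => ?_)
    (((summable_nat_rpow_neg ht).subtype S).mul_left _)
  rcases eq_or_ne m 0 with rfl | h0
  · simp [Real.zero_rpow (by linarith : -s ≠ 0), Real.zero_rpow (by linarith : -t ≠ 0)]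
  · have hm0 : (0 : ℝ) < m := by exact_mod_cast Nat.pos_of_ne_zero h0
    calc (m : ℝ) ^ (-s) = (m : ℝ) ^ (t - s) * (m : ℝ) ^ (-t) := by
          rw [← Real.rpow_add hm0]; ring_nf
      _ ≤ (N : ℝ) ^ (t - s) * (m : ℝ) ^ (-t) := by
          refine mul_le_mul_of_nonneg_right ?_ (Real.rpow_nonneg hm0.le _)
          exact Real.rpow_le_rpow_of_nonpos (by exact_mod_cast hN)
            (by exact_mod_cast hmin m hm h0) (by linarith)

end LeastElement

lemma mul_rpow_neg_rpow_neg_inv {a K s : ℝ} (ha : 0 ≤ a) (hK : 0 ≤ K) (hs : s ≠ 0) :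
    (K * a ^ (-s)) ^ (-1 / s) = K ^ (-1 / s) * a := by
  rw [Real.mul_rpow hK (Real.rpow_nonneg ha _), ← Real.rpow_mul ha,
    show -s * (-1 / s) = 1 by field_simp, Real.rpow_one]

lemma tendsto_const_rpow_neg_inv {K : ℝ} (hK : K ≠ 0) :
    Tendsto (fun s : ℝ => K ^ (-1 / s)) atTop (𝓝 1) := by
  have h := (Real.continuousAt_const_rpow hK).tendsto.comp
    ((tendsto_const_nhds (x := (-1 : ℝ))).div_atTop tendsto_id)
  simpa only [id_eq, Function.comp_def, Real.rpow_zero] using h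

lemma tendsto_rpow_neg_inv_of_le_of_le {f : ℝ → ℝ} {a c K : ℝ} (ha : 0 < a) (hc : 0 < c)
    (hK : 0 < K) (hlo : ∀ᶠ s : ℝ in atTop, c * a ^ (-s) ≤ f s)
    (hhi : ∀ᶠ s : ℝ in atTop, f s ≤ K * a ^ (-s)) :
    Tendsto (fun s : ℝ => f s ^ (-1 / s)) atTop (𝓝 a) := by
  have limit {L : ℝ} (hL : 0 < L) :
      Tendsto (fun s : ℝ => (L * a ^ (-s)) ^ (-1 / s)) atTop (𝓝 a) := by
    have h := (tendsto_const_rpow_neg_inv hL.ne').mul_const a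
    rw [one_mul] at h
    refine h.congr' ?_
    filter_upwards [eventually_ne_atTop 0] with s hs
    rw [mul_rpow_neg_rpow_neg_inv ha.le hL.le hs]
  have lower_pos : ∀ s : ℝ, 0 < c * a ^ (-s) := fun s => mul_pos hc (Real.rpow_pos_of_pos ha _)
  refine tendsto_of_tendsto_of_tendsto_of_le_of_le' (limit hK) (limit hc) ?_ ?_
  · filter_upwards [hlo, hhi, eventually_gt_atTop 0] with s hlo hhi hs
    exact Real.rpow_le_rpow_of_nonpos ((lower_pos s).trans_le hlo) hhi
      (div_nonpos_of_nonpos_of_nonneg (by norm_num) hs.le)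
  · filter_upwards [hlo, eventually_gt_atTop 0] with s hlo hs
    exact Real.rpow_le_rpow_of_nonpos (lower_pos s) hlo
      (div_nonpos_of_nonpos_of_nonneg (by norm_num) hs.le)

theorem tendsto_tsum_rpow_neg_rpow_neg_inv {S : Set ℕ} {N : ℕ} (hNS : N ∈ S) (hN : 0 < N)
    (hmin : ∀ m ∈ S, m ≠ 0 → N ≤ m) :
    Tendsto (fun s : ℝ => (∑' m : S, ((m : ℕ) : ℝ) ^ (-s)) ^ (-1 / s)) atTop (𝓝 N) := by
  have hN' : (0 : ℝ) < N := by exact_mod_cast hN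
  have hN_le_tsum := rpow_neg_le_tsum_rpow_neg hNS one_lt_two
  refine tendsto_rpow_neg_inv_of_le_of_le hN' one_pos
    (mul_pos (Real.rpow_pos_of_pos hN' 2) ((Real.rpow_pos_of_pos hN' _).trans_le hN_le_tsum)) ?_ ?_
  · filter_upwards [eventually_gt_atTop 1] with s hs
    rw [one_mul]
    exact rpow_neg_le_tsum_rpow_neg hNS hs
  · filter_upwards [eventually_ge_atTop 2] with s hs
    calc ∑' m : S, ((m : ℕ) : ℝ) ^ (-s)
        ≤ (N : ℝ) ^ (2 - s) * ∑' m : S, ((m : ℕ) : ℝ) ^ (-2 : ℝ) :=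
          tsum_rpow_neg_le_rpow_mul_tsum hN hmin one_lt_two hs
      _ = _ := by rw [sub_eq_add_neg, Real.rpow_add hN']; ring

theorem stmt2 (n : ℕ) :
    Tendsto (fun s : ℝ => (realZeta s - Qpartial n s) ^ (-1 / s)) atTop
      (𝓝 (nthPrime n : ℝ)) := by
  have hp : (nthPrime n).Prime := Nat.prime_nth_prime n
  refine (tendsto_tsum_rpow_neg_rpow_neg_inv hp.notMem_smoothNumbers hp.pos
    fun m hm h0 => Nat.smoothNumbers_compl _ ⟨hm, h0⟩).congr' ?_
  filter_upwards [eventually_gt_atTop 1] with s hs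
  rw [realZeta_sub_Qpartial hs]
end

section
/- Let p_1 < p_2 < ... be the primes and define P(s) = Σ_{p prime} p^{-s} and the partial prime zeta function P_n(s) = Σ_{k=1}^{n} p_k^{-s}. Then for every n ≥ 0, the limit as real s → ∞ of (P(s) - P_n(s))^{-1/s} equals p_{n+1}. -/
open Filter Topology

noncomputable def primeZeta (s : ℝ) : ℝ := ∑' p : Nat.Primes, ((p : ℕ) : ℝ) ^ (-s)

/-- Partial prime zeta function `P_n(s) = Σ_{k=1}^n p_k^{-s}` (with `P_0 = 0`). -/
noncomputable def primeZetaPartial (n : ℕ) (s : ℝ) : ℝ :=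
  ∑ k ∈ Finset.range n, ((nthPrime k : ℝ)) ^ (-s)

/-! The tail `P(s) - P_n(s) = Σ_{k ≥ n} p_k^{-s}` is squeezed between `p_n^{-s}` and
`C p_n^{-s}` with `C = p_n² (P(2) - P_n(2))`, since `p_k^{-s} ≤ p_k^{-2} p_n^{2-s}` for
`k ≥ n` and `s ≥ 2`. Taking `-1/s`-th powers gives `C^{-1/s} p_n ≤ (P(s) - P_n(s))^{-1/s} ≤ p_n`,
and `C^{-1/s} → 1`. -/

section Squeeze

variable {q C : ℝ}

lemma rpow_neg_rpow_neg_one_div (hq : 0 ≤ q) {s : ℝ} (hs : s ≠ 0) :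
    (q ^ (-s)) ^ (-1 / s) = q := by
  rw [← Real.rpow_mul hq, show -s * (-1 / s) = 1 by field_simp, Real.rpow_one]

lemma tendsto_rpow_neg_one_div_of_le_of_le {f : ℝ → ℝ} (hq : 0 < q) (hC : 0 < C)
    (hlower : ∀ᶠ s in atTop, q ^ (-s) ≤ f s) (hupper : ∀ᶠ s in atTop, f s ≤ C * q ^ (-s)) :
    Tendsto (fun s => f s ^ (-1 / s)) atTop (𝓝 q) := by
  have hexp : Tendsto (fun s : ℝ => -1 / s) atTop (𝓝 0) :=
    tendsto_const_nhds.div_atTop tendsto_id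
  have hCpow : Tendsto (fun s : ℝ => C ^ (-1 / s) * q) atTop (𝓝 q) := by
    simpa using
      ((Real.continuousAt_const_rpow hC.ne').tendsto.comp hexp).mul_const q
  have hexp_nonpos : ∀ᶠ s : ℝ in atTop, 0 < s ∧ -1 / s ≤ 0 :=
    (eventually_gt_atTop 0).mono fun s hs =>
      ⟨hs, div_nonpos_of_nonpos_of_nonneg (by norm_num) hs.le⟩
  refine tendsto_of_tendsto_of_tendsto_of_le_of_le' hCpow tendsto_const_nhds ?_ ?_
  · filter_upwards [hlower, hupper, hexp_nonpos] with s hl hu ⟨hs, hneg⟩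
    calc C ^ (-1 / s) * q = (C * q ^ (-s)) ^ (-1 / s) := by
          rw [Real.mul_rpow hC.le (by positivity), rpow_neg_rpow_neg_one_div hq.le hs.ne']
      _ ≤ f s ^ (-1 / s) :=
          Real.rpow_le_rpow_of_nonpos ((Real.rpow_pos_of_pos hq _).trans_le hl) hu hneg
  · filter_upwards [hlower, hexp_nonpos] with s hl ⟨hs, hneg⟩
    calc f s ^ (-1 / s) ≤ (q ^ (-s)) ^ (-1 / s) :=
          Real.rpow_le_rpow_of_nonpos (Real.rpow_pos_of_pos hq _) hl hneg
      _ = q := rpow_neg_rpow_neg_one_div hq.le hs.ne'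

end Squeeze

section TailBounds

variable {ι : Type*} {x : ι → ℝ} {x₀ s t : ℝ}

lemma rpow_neg_le_rpow_sub_mul {y : ℝ} (hx₀ : 0 < x₀) (hy : x₀ ≤ y) (hts : t ≤ s) :
    y ^ (-s) ≤ x₀ ^ (t - s) * y ^ (-t) := by
  have hy₀ : 0 < y := hx₀.trans_le hy
  calc y ^ (-s) = y ^ (t - s) * y ^ (-t) := by
        rw [← Real.rpow_add hy₀]; ring_nf
    _ ≤ x₀ ^ (t - s) * y ^ (-t) :=
        mul_le_mul_of_nonneg_right (Real.rpow_le_rpow_of_nonpos hx₀ hy (by linarith))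
          (Real.rpow_nonneg hy₀.le _)

lemma summable_rpow_neg_of_le (hx₀ : 0 < x₀) (hx : ∀ i, x₀ ≤ x i)
    (hsum : Summable fun i => x i ^ (-t)) (hts : t ≤ s) :
    Summable fun i => x i ^ (-s) := by
  refine hsum.mul_left (x₀ ^ (t - s)) |>.of_nonneg_of_le
    (fun i => Real.rpow_nonneg (hx₀.le.trans (hx i)) _) fun i =>
    rpow_neg_le_rpow_sub_mul hx₀ (hx i) hts

lemma tsum_rpow_neg_le_of_le (hx₀ : 0 < x₀) (hx : ∀ i, x₀ ≤ x i)
    (hsum : Summable fun i => x i ^ (-t)) (hts : t ≤ s) :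
    ∑' i, x i ^ (-s) ≤ x₀ ^ t * (∑' i, x i ^ (-t)) * x₀ ^ (-s) := by
  have hpow : x₀ ^ t * x₀ ^ (-s) = x₀ ^ (t - s) := by
    rw [← Real.rpow_add hx₀, sub_eq_add_neg]
  rw [mul_right_comm, hpow, ← tsum_mul_left]
  refine (summable_rpow_neg_of_le hx₀ hx hsum hts).tsum_le_tsum
    (fun i => rpow_neg_le_rpow_sub_mul hx₀ (hx i) hts) (hsum.mul_left _)

end TailBounds

lemma nthPrime_prime (k : ℕ) : (nthPrime k).Prime :=
  Nat.nth_mem_of_infinite Nat.infinite_setOfPred_prime k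

lemma nthPrime_strictMono : StrictMono nthPrime :=
  Nat.nth_strictMono Nat.infinite_setOfPred_prime

noncomputable def nthPrimeEquiv : ℕ ≃ Nat.Primes where
  toFun k := ⟨nthPrime k, nthPrime_prime k⟩
  invFun p := Nat.count Nat.Prime p
  left_inv k := Nat.count_nth_of_infinite Nat.infinite_setOfPred_prime k
  right_inv p := Subtype.ext (Nat.nth_count p.2)

lemma primeZeta_eq_tsum_nthPrime (s : ℝ) :
    primeZeta s = ∑' k, (nthPrime k : ℝ) ^ (-s) :=
  (nthPrimeEquiv.tsum_eq fun p : Nat.Primes => ((p : ℕ) : ℝ) ^ (-s)).symm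

lemma summable_nthPrime_rpow_neg {s : ℝ} (hs : 1 < s) :
    Summable fun k => (nthPrime k : ℝ) ^ (-s) :=
  nthPrimeEquiv.summable_iff.mpr (Nat.Primes.summable_rpow.mpr (by linarith))

lemma primeZeta_sub_primeZetaPartial {s : ℝ} (hs : 1 < s) (n : ℕ) :
    primeZeta s - primeZetaPartial n s = ∑' k, (nthPrime (k + n) : ℝ) ^ (-s) := by
  rw [primeZeta_eq_tsum_nthPrime, primeZetaPartial,
    ← (summable_nthPrime_rpow_neg hs).sum_add_tsum_nat_add n, add_sub_cancel_left]

lemma rpow_neg_nthPrime_le_primeZeta_sub_primeZetaPartial {s : ℝ} (hs : 1 < s) (n : ℕ) :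
    (nthPrime n : ℝ) ^ (-s) ≤ primeZeta s - primeZetaPartial n s := by
  rw [primeZeta_sub_primeZetaPartial hs]
  simpa using ((summable_nat_add_iff n).mpr (summable_nthPrime_rpow_neg hs)).le_tsum 0
    fun k _ => by positivity

lemma primeZeta_sub_primeZetaPartial_le {s : ℝ} (hs : 2 ≤ s) (n : ℕ) :
    primeZeta s - primeZetaPartial n s ≤
      (nthPrime n : ℝ) ^ (2 : ℝ) * (primeZeta 2 - primeZetaPartial n 2) *
        (nthPrime n : ℝ) ^ (-s) := by
  rw [primeZeta_sub_primeZetaPartial (by linarith), primeZeta_sub_primeZetaPartial one_lt_two]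
  exact tsum_rpow_neg_le_of_le (mod_cast (nthPrime_prime n).pos)
    (fun k => mod_cast nthPrime_strictMono.monotone (Nat.le_add_left n k))
    ((summable_nat_add_iff n).mpr (summable_nthPrime_rpow_neg one_lt_two)) hs

theorem stmt4 (n : ℕ) :
    Tendsto (fun s : ℝ => (primeZeta s - primeZetaPartial n s) ^ (-1 / s)) atTop
      (𝓝 (nthPrime n : ℝ)) := by
  have hp : (0 : ℝ) < nthPrime n := mod_cast (nthPrime_prime n).pos
  have htail_two : 0 < primeZeta 2 - primeZetaPartial n 2 :=
    (Real.rpow_pos_of_pos hp _).trans_le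
      (rpow_neg_nthPrime_le_primeZeta_sub_primeZetaPartial one_lt_two n)
  exact tendsto_rpow_neg_one_div_of_le_of_le hp (by positivity)
    ((eventually_gt_atTop 1).mono fun s hs =>
      rpow_neg_nthPrime_le_primeZeta_sub_primeZetaPartial hs n)
    ((eventually_ge_atTop 2).mono fun s hs => primeZeta_sub_primeZetaPartial_le hs n)
end
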